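/- Let I ⊆ {1,…,n} with |I| ≥ 2, let a = (a_1,…,a_n) be positive integers, and r an integer. Then ∑_{i ∈ I} ∑_{∅ ≠ J ⊆ I∖{i}} (−1)^{|J|+1} q^{∑_{j=i+1}^{n} a_j + L_{I∖{i},J}(a^{(i)})} · (1−q^{a_i})(1−q^{a_J}) / ((1−q^{|a|−a_i+r})(1−q^{|a|−a_i−a_J+r})) = ∑_{∅ ≠ J ⊆ I} (−1)^{|J|} q^{L_{I,J}(a)} (1−q^{a_J}) / (1−q^{|a|−a_J+r}), as an identity of rational functions in q. -/

import Mathlib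

/-!
Partial fractions split each summand on the left, since
`(1 - y) / ((1 - y w) (1 - w)) = 1 / (1 - w) - y / (1 - y w)` with `y = q^{a_J}`,
`w = q^{|a| - a_i - a_J + r}`. The first parts, regrouped by `K = J ∪ {i}`, telescope over
`i ∈ K` to the term of `K` on the right (`|K| ≥ 2`). For fixed `i`, the second parts form the
expansion of `q^{L_{I,{i}}(a)} ∏_{j ∈ I ∖ {i}} (1 - q^{-(c_j - 1) a_j})` with its constant term
removed, where `c_j = #{u ∈ I ∖ {i} | u ≤ j}`. Since `|I| ≥ 2`, `j = min (I ∖ {i})` exists and has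
`c_j = 1`, so the product vanishes and they add up to the term of `{i}` on the right.
-/

open Finset

/-- The indeterminate `q` in the field of rational functions `ℚ(q)`. -/
noncomputable def q : RatFunc ℚ := RatFunc.X

/-- `L_{I,J}(a) = ∑_{(u,v) : u ∈ I, u ≤ v ≤ n, v ∉ J} a_v`. -/
def Lsum {n : ℕ} (I J : Finset (Fin n)) (a : Fin n → ℤ) : ℤ :=
  ∑ u ∈ I, ∑ v ∈ Finset.univ.filter (fun v => u ≤ v ∧ v ∉ J), a v

/-- `L_{I∖{i},J}(a^{(i)}) = ∑_{(u,v) : u ∈ I∖{i}, u ≤ v ≤ n, v ∉ J, v ≠ i} a_v`. -/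
def LsumDel {n : ℕ} (i : Fin n) (I J : Finset (Fin n)) (a : Fin n → ℤ) : ℤ :=
  ∑ u ∈ I.erase i, ∑ v ∈ Finset.univ.filter (fun v => u ≤ v ∧ v ∉ J ∧ v ≠ i), a v

theorem zpow_sum₀ {ι G₀ : Type*} [CommGroupWithZero G₀] {x : G₀} (hx : x ≠ 0) (s : Finset ι)
    (f : ι → ℤ) : x ^ (∑ i ∈ s, f i) = ∏ i ∈ s, x ^ f i := by
  classical
  induction s using Finset.induction with
  | empty => simp
  | insert j s hj ih => rw [sum_insert hj, prod_insert hj, zpow_add₀ hx, ih]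

theorem one_sub_div_one_sub_mul_one_sub {K : Type*} [Field K] {y w : K} (hyw : 1 - y * w ≠ 0)
    (hw : 1 - w ≠ 0) : (1 - y) / ((1 - y * w) * (1 - w)) = 1 / (1 - w) - y / (1 - y * w) := by
  field_simp
  ring

namespace Finset

section Ring
variable {ι R : Type*} [CommRing R]

theorem sum_prod_Ioi_mul_one_sub [LinearOrder ι] (s : Finset ι) (y : ι → R) :
    ∑ i ∈ s, (∏ j ∈ s with i < j, y j) * (1 - y i) = 1 - ∏ i ∈ s, y i := by
  have h := prod_sub_ordered s y (fun i => y i - 1)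
  simp only [sub_sub_cancel, prod_const_one, mul_one] at h
  have hneg : ∑ i ∈ s, (∏ j ∈ s with i < j, y j) * (1 - y i)
      = -∑ i ∈ s, (y i - 1) * ∏ j ∈ s with i < j, y j := by
    rw [← sum_neg_distrib]
    exact sum_congr rfl fun _ _ => by ring
  linear_combination hneg - h

theorem sum_zpow_mul_one_sub_zpow [LinearOrder ι] {K : Type*} [Field K] {x : K} (hx : x ≠ 0)
    (s : Finset ι) (a : ι → ℤ) :
    ∑ i ∈ s, x ^ (∑ j ∈ s with i < j, a j) * (1 - x ^ a i) = 1 - x ^ (∑ i ∈ s, a i) := by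
  simp only [zpow_sum₀ hx]
  exact sum_prod_Ioi_mul_one_sub s _

theorem sum_powerset_nonempty_neg_one_pow_mul_prod_eq_neg_one [DecidableEq ι] {s : Finset ι}
    {y : ι → R} {j : ι} (hj : j ∈ s) (hy : y j = 1) :
    ∑ t ∈ s.powerset with t.Nonempty, (-1) ^ #t * ∏ i ∈ t, y i = -1 := by
  have hzero : ∏ i ∈ s, (1 - y i) = 0 := prod_eq_zero hj (by rw [hy, sub_self])
  rw [prod_sub, ← sum_filter_add_sum_filter_not _ (·.Nonempty)] at hzero
  simp only [not_nonempty_iff_eq_empty, filter_eq', empty_mem_powerset, if_true, sum_singleton,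
    card_empty, pow_zero, prod_empty, prod_const_one, mul_one] at hzero
  linear_combination hzero

end Ring

section Powerset
variable {α M : Type*} [AddCommMonoid M]

theorem sum_powerset_nonempty_eq_sum_singleton_add (s : Finset α) (f : Finset α → M) :
    ∑ t ∈ s.powerset with t.Nonempty, f t = ∑ i ∈ s, f {i} + ∑ t ∈ s.powerset with 2 ≤ #t, f t := by
  have hsingle : ∑ i ∈ s, f {i} = ∑ t ∈ s.powerset with #t = 1, f t := by
    rw [← powersetCard_eq_filter, powersetCard_one, sum_map]
    rfl
  rw [hsingle, ← sum_filter_add_sum_filter_not _ (fun t => #t = 1), filter_filter, filter_filter]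
  congr 1 <;> refine sum_congr (filter_congr fun t _ => ?_) fun _ _ => rfl
  · rw [← card_pos]; omega
  · rw [← card_pos]; omega

theorem sum_sum_powerset_erase_insert [DecidableEq α] (s : Finset α) (F : α → Finset α → M) :
    ∑ i ∈ s, ∑ t ∈ (s.erase i).powerset with t.Nonempty, F i (insert i t)
      = ∑ t ∈ s.powerset with 2 ≤ #t, ∑ i ∈ t, F i t := by
  rw [sum_sigma', sum_sigma']
  refine sum_nbij' (fun p => ⟨insert p.1 p.2, p.1⟩) (fun p => ⟨p.2, p.1.erase p.2⟩)
    ?_ ?_ ?_ ?_ fun _ _ => rfl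
  · rintro ⟨i, t⟩ hp
    simp only [mem_sigma, mem_filter, mem_powerset, subset_erase] at hp ⊢
    obtain ⟨hi, ⟨hts, hit⟩, hne⟩ := hp
    refine ⟨⟨insert_subset hi hts, ?_⟩, mem_insert_self _ _⟩
    rw [card_insert_of_notMem hit]
    have := hne.card_pos
    omega
  · rintro ⟨t, i⟩ hp
    simp only [mem_sigma, mem_filter, mem_powerset] at hp ⊢
    obtain ⟨⟨hts, hcard⟩, hi⟩ := hp
    refine ⟨hts hi, erase_subset_erase _ hts, ?_⟩
    rw [← card_pos, card_erase_of_mem hi]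
    omega
  · rintro ⟨i, t⟩ hp
    simp only [mem_sigma, mem_filter, mem_powerset, subset_erase] at hp
    simp [erase_insert hp.2.1.2]
  · rintro ⟨t, i⟩ hp
    simp only [mem_sigma] at hp
    simp [insert_erase hp.2]

end Powerset

end Finset

theorem q_ne_zero : q ≠ 0 := RatFunc.X_ne_zero

theorem q_pow_ne_one {m : ℕ} (hm : m ≠ 0) : q ^ m ≠ 1 := by
  intro h
  have h' : algebraMap (Polynomial ℚ) (RatFunc ℚ) (Polynomial.X ^ m) = algebraMap _ _ 1 := by
    simpa [q, ← RatFunc.algebraMap_X] using h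
  have := congrArg Polynomial.natDegree (RatFunc.algebraMap_injective ℚ h')
  exact hm (by simpa using this)

theorem one_sub_q_zpow_ne_zero {e : ℤ} (he : e ≠ 0) : 1 - q ^ e ≠ 0 := by
  rw [sub_ne_zero, ne_comm]
  rcases e with m | m
  · exact_mod_cast q_pow_ne_one (Int.ofNat_ne_zero.mp he)
  · rw [zpow_negSucc, inv_ne_one]
    exact q_pow_ne_one m.succ_ne_zero

section Lsum
variable {n : ℕ} (I : Finset (Fin n)) (a : Fin n → ℤ)

theorem Lsum_eq_sum_compl (K : Finset (Fin n)) :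
    Lsum I K a = ∑ v ∈ Kᶜ, (#{u ∈ I | u ≤ v} : ℤ) * a v := by
  unfold Lsum
  rw [sum_comm' (t' := Kᶜ) (s' := fun v => {u ∈ I | u ≤ v})]
  · simp only [sum_const, nsmul_eq_mul]
  · intro u v
    simp only [mem_filter, mem_univ, true_and, mem_compl]
    tauto

theorem Lsum_union {K J : Finset (Fin n)} (h : Disjoint K J) :
    Lsum I (K ∪ J) a = Lsum I K a - ∑ j ∈ J, (#{u ∈ I | u ≤ j} : ℤ) * a j := by
  rw [Lsum_eq_sum_compl, Lsum_eq_sum_compl, compl_union, ← sdiff_eq_inter_compl,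
    sum_sdiff_eq_sub (subset_compl_iff_disjoint_right.mpr h.symm)]

theorem LsumDel_eq_Lsum_erase (i : Fin n) (J : Finset (Fin n)) :
    LsumDel i I J a = Lsum (I.erase i) (insert i J) a := by
  unfold LsumDel Lsum
  refine sum_congr rfl fun u _ => sum_congr (filter_congr fun v _ => ?_) fun _ _ => rfl
  rw [mem_insert]
  tauto

theorem Lsum_add_sum_Ioi {i : Fin n} {K : Finset (Fin n)} (hiI : i ∈ I) (hiK : i ∈ K) :
    Lsum I K a + ∑ v ∈ K with i < v, a v = ∑ v with i < v, a v + Lsum (I.erase i) K a := by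
  have hsplit : ∑ v with i ≤ v ∧ v ∉ K, a v + ∑ v ∈ K with i < v, a v = ∑ v with i < v, a v := by
    rw [← sum_filter_add_sum_filter_not {v | i < v} (· ∈ K), filter_filter, filter_filter, add_comm]
    congr 1
    · exact sum_congr (by ext v; simp [and_comm]) fun _ _ => rfl
    · refine sum_congr (filter_congr fun v _ => ?_) fun _ _ => rfl
      constructor
      · rintro ⟨hiv, hvK⟩
        exact ⟨lt_of_le_of_ne hiv (by rintro rfl; exact hvK hiK), hvK⟩
      · rintro ⟨hiv, hvK⟩
        exact ⟨hiv.le, hvK⟩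
  unfold Lsum
  rw [← add_sum_erase _ _ hiI, ← hsplit]
  ring

theorem sum_Ioi_add_LsumDel_add_sum {i : Fin n} {J : Finset (Fin n)} (hi : i ∈ I) (hiJ : i ∉ J) :
    ∑ j with i < j, a j + LsumDel i I J a + ∑ j ∈ J, a j
      = Lsum I {i} a - ∑ j ∈ J, ((#{u ∈ I.erase i | u ≤ j} : ℤ) - 1) * a j := by
  have h := Lsum_add_sum_Ioi I a hi (mem_singleton_self i)
  rw [filter_singleton, if_neg (lt_irrefl i), sum_empty, add_zero] at h
  rw [LsumDel_eq_Lsum_erase, insert_eq, Lsum_union _ _ (disjoint_singleton_left.mpr hiJ), h]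
  simp only [sub_mul, one_mul, sum_sub_distrib]
  ring

end Lsum

section Terms
variable {n : ℕ} (I : Finset (Fin n)) (a : Fin n → ℤ) (r : ℤ)

noncomputable def telescopingTerm (i : Fin n) (K : Finset (Fin n)) : RatFunc ℚ :=
  (-1) ^ #K * q ^ Lsum I K a / (1 - q ^ (∑ j, a j - ∑ j ∈ K, a j + r)) *
    (q ^ (∑ v ∈ K with i < v, a v) * (1 - q ^ a i))

theorem sum_telescopingTerm (K : Finset (Fin n)) :
    ∑ i ∈ K, telescopingTerm I a r i K
      = (-1) ^ #K * q ^ Lsum I K a * (1 - q ^ (∑ j ∈ K, a j)) /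
          (1 - q ^ (∑ j, a j - ∑ j ∈ K, a j + r)) := by
  simp only [telescopingTerm]
  rw [← mul_sum, sum_zpow_mul_one_sub_zpow q_ne_zero, div_mul_eq_mul_div]

theorem summand_eq_telescopingTerm_add {i : Fin n} {J : Finset (Fin n)} (hi : i ∈ I)
    (hJ : J ⊆ I.erase i)
    (hden : ∀ S : Finset (Fin n), (1 : RatFunc ℚ) - q ^ (∑ j, a j - ∑ j ∈ S, a j + r) ≠ 0) :
    (-1 : RatFunc ℚ) ^ (#J + 1) * q ^ (∑ j with i < j, a j + LsumDel i I J a) *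
        ((1 - q ^ a i) * (1 - q ^ (∑ j ∈ J, a j))) /
        ((1 - q ^ (∑ j, a j - a i + r)) * (1 - q ^ (∑ j, a j - a i - ∑ j ∈ J, a j + r)))
      = telescopingTerm I a r i (insert i J) +
        (-1) ^ #J * q ^ (∑ j with i < j, a j + LsumDel i I J a + ∑ j ∈ J, a j) *
          ((1 - q ^ a i) / (1 - q ^ (∑ j, a j - a i + r))) := by
  have hiJ : i ∉ J := fun h => ne_of_mem_erase (hJ h) rfl
  have hexp : ∑ j with i < j, a j + LsumDel i I J a
      = Lsum I (insert i J) a + ∑ v ∈ insert i J with i < v, a v := by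
    rw [LsumDel_eq_Lsum_erase, Lsum_add_sum_Ioi I a hi (mem_insert_self i J)]
  have hK : ∑ j, a j - ∑ j ∈ insert i J, a j + r = ∑ j, a j - a i - ∑ j ∈ J, a j + r := by
    rw [sum_insert hiJ]
    ring
  have hZ := sum_singleton a i ▸ hden {i}
  have hW := hK ▸ hden (insert i J)
  have hZW : q ^ (∑ j, a j - a i + r)
      = q ^ (∑ j ∈ J, a j) * q ^ (∑ j, a j - a i - ∑ j ∈ J, a j + r) := by
    rw [← zpow_add₀ q_ne_zero]
    ring_nf
  rw [hZW] at hZ ⊢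
  unfold telescopingTerm
  rw [hK, card_insert_of_notMem hiJ, zpow_add₀ q_ne_zero _ (∑ j ∈ J, a j), hexp,
    zpow_add₀ q_ne_zero]
  linear_combination (-1 : RatFunc ℚ) ^ (#J + 1) * q ^ Lsum I (insert i J) a *
    q ^ (∑ v ∈ insert i J with i < v, a v) * (1 - q ^ a i) *
    one_sub_div_one_sub_mul_one_sub hZ hW

theorem sum_powerset_nonempty_neg_one_pow_mul_q_zpow {i : Fin n} (hi : i ∈ I)
    (hI : (I.erase i).Nonempty) :
    ∑ J ∈ (I.erase i).powerset with J.Nonempty,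
        (-1 : RatFunc ℚ) ^ #J * q ^ (∑ j with i < j, a j + LsumDel i I J a + ∑ j ∈ J, a j)
      = -q ^ Lsum I {i} a := by
  set m := (I.erase i).min' hI
  have hm : {u ∈ I.erase i | u ≤ m} = {m} := by
    ext u
    simp only [mem_filter, mem_singleton]
    refine ⟨fun ⟨hu, hum⟩ => le_antisymm hum (min'_le _ _ hu), ?_⟩
    rintro rfl
    exact ⟨min'_mem _ _, le_rfl⟩
  calc _ = ∑ J ∈ (I.erase i).powerset with J.Nonempty, q ^ Lsum I {i} a *
        ((-1) ^ #J * ∏ j ∈ J, (q ^ (((#{u ∈ I.erase i | u ≤ j} : ℤ) - 1) * a j))⁻¹) := by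
        refine sum_congr rfl fun J hJ => ?_
        have hiJ : i ∉ J := fun h => ne_of_mem_erase (mem_powerset.mp (mem_filter.mp hJ).1 h) rfl
        rw [sum_Ioi_add_LsumDel_add_sum I a hi hiJ, zpow_sub₀ q_ne_zero, zpow_sum₀ q_ne_zero,
          div_eq_mul_inv, ← prod_inv_distrib]
        ring
    _ = -q ^ Lsum I {i} a := by
        rw [← mul_sum, sum_powerset_nonempty_neg_one_pow_mul_prod_eq_neg_one (min'_mem _ hI)
          (by rw [hm, card_singleton, Nat.cast_one, sub_self, zero_mul, zpow_zero, inv_one]),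
          mul_neg_one]

end Terms

/-- Proposition 5.4: for `I ⊆ {1,…,n}` with `|I| ≥ 2`, positive integers `a_i` and `r ≥ 1`,
`∑_{i ∈ I} ∑_{∅ ≠ J ⊆ I∖{i}} (-1)^{|J|+1} q^{∑_{j>i} a_j + L_{I∖{i},J}(a^{(i)})}
  (1-q^{a_i})(1-q^{a_J}) / ((1-q^{|a|-a_i+r})(1-q^{|a|-a_i-a_J+r}))
= ∑_{∅ ≠ J ⊆ I} (-1)^{|J|} q^{L_{I,J}(a)} (1-q^{a_J}) / (1-q^{|a|-a_J+r})`. -/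
theorem double_sum_reduction (n : ℕ) (I : Finset (Fin n)) (hI : 2 ≤ I.card)
    (a : Fin n → ℤ) (ha : ∀ i, 0 < a i) (r : ℤ) (hr : 1 ≤ r) :
    ∑ i ∈ I, ∑ J ∈ (I.erase i).powerset.filter (fun J => J.Nonempty),
        (-1 : RatFunc ℚ) ^ (J.card + 1) *
          q ^ ((∑ j ∈ Finset.univ.filter (fun j => i < j), a j) + LsumDel i I J a) *
          ((1 - q ^ a i) * (1 - q ^ (∑ j ∈ J, a j))) /
          ((1 - q ^ ((∑ j, a j) - a i + r)) * (1 - q ^ ((∑ j, a j) - a i - (∑ j ∈ J, a j) + r))) =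
      ∑ J ∈ I.powerset.filter (fun J => J.Nonempty),
        (-1 : RatFunc ℚ) ^ J.card * q ^ (Lsum I J a) * (1 - q ^ (∑ j ∈ J, a j)) /
          (1 - q ^ ((∑ j, a j) - (∑ j ∈ J, a j) + r)) := by
  have hden : ∀ S : Finset (Fin n), (1 : RatFunc ℚ) - q ^ (∑ j, a j - ∑ j ∈ S, a j + r) ≠ 0 :=
    fun S => one_sub_q_zpow_ne_zero <| by
      have := sum_le_sum_of_subset_of_nonneg (subset_univ S) fun i _ _ => (ha i).le
      omega
  rw [sum_congr rfl fun i hi => sum_congr rfl fun J hJ => summand_eq_telescopingTerm_add I a r hi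
    (mem_powerset.mp (mem_filter.mp hJ).1) hden]
  simp only [sum_add_distrib]
  rw [sum_sum_powerset_erase_insert, sum_powerset_nonempty_eq_sum_singleton_add, add_comm]
  congr 1
  · refine sum_congr rfl fun i hi => ?_
    have hne : (I.erase i).Nonempty := by
      rw [← card_pos, card_erase_of_mem hi]
      omega
    rw [← sum_mul, sum_powerset_nonempty_neg_one_pow_mul_q_zpow I a hi hne]
    simp only [card_singleton, sum_singleton]
    ring
  · exact sum_congr rfl fun K _ => sum_telescopingTerm I a r K
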